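/- (If you have lots of gunpowder, shoot early.) For each τ > 0, let b^τ be an optimal intervention of duration τ with start time t_i^τ. Then I_{b^τ}(t_i^τ) ≤ (1 − Scrit)/(γ·τ); consequently, I_{b^τ}(t_i^τ) → 0 and S_{b^τ}(t_i^τ) → 1 as τ → ∞. -/

import Mathlib

noncomputable section

/-- SIR parameters: β > γ > 0. -/
structure SIRParams where
  β : ℝ
  γ : ℝ
  hγ : 0 < γ
  hβγ : γ < β

/-- Basic reproduction number R0 = β/γ. -/
def SIRParams.R0 (p : SIRParams) : ℝ := p.β / p.γ

/-- Critical susceptible fraction Scrit = γ/β = 1/R0. -/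
def SIRParams.Scrit (p : SIRParams) : ℝ := p.γ / p.β

/-- An intervention with start time `ti` and duration `τ`: a right-continuous
function `b : ℝ → [0,1]` with finitely many discontinuity points such that
`b t = 1` for all `t ∉ [ti, ti + τ]`. -/
structure Intervention (p : SIRParams) where
  b : ℝ → ℝ
  ti : ℝ
  τ : ℝ
  hτ : 0 < τ
  mem_Icc : ∀ t, b t ∈ Set.Icc (0 : ℝ) 1
  rightCont : ∀ t, ContinuousWithinAt b (Set.Ici t) t
  finiteDisc : {t : ℝ | ¬ ContinuousAt b t}.Finite
  outside : ∀ t, t ∉ Set.Icc ti (ti + τ) → b t = 1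

/-- The null intervention b ≡ 1. -/
def nullB : ℝ → ℝ := fun _ => 1

/-- An SIR trajectory under transmission-reduction function `b` on a set `J ⊆ ℝ`
(an interval unbounded above, encoded as being upward closed): a pair of
continuous functions `S, I : ℝ → ℝ` with `0 < S ≤ 1`, `0 ≤ I`, `S + I ≤ 1` on `J`,
satisfying the integral form of the SIR equations. -/
structure IsSIRTrajectory (p : SIRParams) (b : ℝ → ℝ) (J : Set ℝ) (S I : ℝ → ℝ) : Prop where
  upClosed : ∀ t ∈ J, ∀ s, t ≤ s → s ∈ J
  contS : ContinuousOn S J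
  contI : ContinuousOn I J
  Spos : ∀ t ∈ J, 0 < S t
  Sle_one : ∀ t ∈ J, S t ≤ 1
  Inonneg : ∀ t ∈ J, 0 ≤ I t
  sum_le_one : ∀ t ∈ J, S t + I t ≤ 1
  S_eq : ∀ t0 ∈ J, ∀ t ∈ J, t0 ≤ t →
    S t = S t0 - ∫ s in t0..t, b s * p.β * S s * I s
  I_eq : ∀ t0 ∈ J, ∀ t ∈ J, t0 ≤ t →
    I t = I t0 + ∫ s in t0..t, (b s * p.β * S s * I s - p.γ * I s)

/-- `ImaxAt J I t = sup_{x ≥ t, x ∈ J} I x`. -/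
def ImaxAt (J : Set ℝ) (I : ℝ → ℝ) (t : ℝ) : ℝ := sSup (I '' (J ∩ Set.Ici t))

/-- Reference emerging-epidemic trajectory: an SIR trajectory without
intervention on ℝ with I₁ > 0 everywhere, S₁ → 1 and I₁ → 0 as t → −∞. -/
def IsReference (p : SIRParams) (S1 I1 : ℝ → ℝ) : Prop :=
  IsSIRTrajectory p nullB Set.univ S1 I1 ∧
  (∀ t, 0 < I1 t) ∧
  Filter.Tendsto S1 Filter.atBot (nhds 1) ∧
  Filter.Tendsto I1 Filter.atBot (nhds 0)

/-- The controlled trajectory of intervention `bi`: the SIR trajectory under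
`bi.b` on ℝ coinciding with the reference trajectory `(S1, I1)` on `(−∞, bi.ti]`. -/
def IsControlled (p : SIRParams) (S1 I1 : ℝ → ℝ) (bi : Intervention p)
    (S I : ℝ → ℝ) : Prop :=
  IsSIRTrajectory p bi.b Set.univ S I ∧ ∀ t ≤ bi.ti, S t = S1 t ∧ I t = I1 t

/-- Global peak prevalence of a controlled trajectory: `Imax = sup_{t ∈ ℝ} I t`. -/
def Imax (I : ℝ → ℝ) : ℝ := sSup (Set.range I)

/-- An intervention `bs` (with controlled trajectory `(Sb, Ib)`) is optimal for
its duration if its peak prevalence is at most that of any intervention of the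
same duration (with any start time). -/
def IsOptimal (p : SIRParams) (S1 I1 : ℝ → ℝ) (bs : Intervention p)
    (Sb Ib : ℝ → ℝ) : Prop :=
  IsControlled p S1 I1 bs Sb Ib ∧
  ∀ (b : Intervention p), b.τ = bs.τ →
    ∀ S I : ℝ → ℝ, IsControlled p S1 I1 b S I → Imax Ib ≤ Imax I

/-- A maintain–suppress intervention with maintenance fraction `f ∈ [0,1]`:
`b t = γ/(β·S t)` on `[ti, ti + f·τ)` and `b t = 0` on `[ti + f·τ, ti + τ]`,
where `S` is the controlled trajectory's susceptible fraction. -/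
def IsMaintainSuppress (p : SIRParams) (bi : Intervention p) (f : ℝ)
    (S : ℝ → ℝ) : Prop :=
  f ∈ Set.Icc (0 : ℝ) 1 ∧
  (∀ t ∈ Set.Ico bi.ti (bi.ti + f * bi.τ), bi.b t = p.γ / (p.β * S t)) ∧
  (∀ t ∈ Set.Icc (bi.ti + f * bi.τ) (bi.ti + bi.τ), bi.b t = 0)

/-- A full suppression intervention: `b t = 0` throughout `[ti, ti + τ]`. -/
def IsFullSuppression (p : SIRParams) (bi : Intervention p) : Prop :=
  ∀ t ∈ Set.Icc bi.ti (bi.ti + bi.τ), bi.b t = 0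

/-- A fixed control intervention with strictness `σ ∈ [0,1]`: `b t = σ`
throughout `[ti, ti + τ]`. -/
def IsFixedControl (p : SIRParams) (bi : Intervention p) (σ : ℝ) : Prop :=
  σ ∈ Set.Icc (0 : ℝ) 1 ∧ ∀ t ∈ Set.Icc bi.ti (bi.ti + bi.τ), bi.b t = σ

/-!
Optimality bounds `Imax (b^τ)` by the peak of any competitor of duration `τ`. The competitor starts
at a time `t₀` where `γ τ I₁(t₀) = S₁(t₀) - Scrit` and holds the prevalence at `I₁(t₀)` until `S`
reaches `Scrit`, which takes exactly the time `τ`; afterwards the epidemic declines. Hence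
`Imax (b^τ) ≤ I₁(t₀) = (S₁(t₀) - Scrit) / (γ τ) ≤ (1 - Scrit) / (γ τ)`. Before its start time
`t_i^τ` the controlled prevalence is the reference one, which is positive, so this bound tending to
`0` forces `t_i^τ → -∞`; then `I(t_i^τ) = I₁(t_i^τ) → 0` and `S(t_i^τ) = S₁(t_i^τ) → 1`.
-/

open MeasureTheory Set Filter Topology

theorem exists_hasDerivAt_rightInverse_of_strictMonoOn {G g : ℝ → ℝ} {s : Set ℝ}
    (hs : IsOpen s) (hG : StrictMonoOn G s) (hG' : ∀ x ∈ s, HasDerivAt G (g x) x)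
    (hg : ∀ x ∈ s, g x ≠ 0) (hsurj : SurjOn G s univ) :
    ∃ ξ : ℝ → ℝ, (∀ t, ξ t ∈ s) ∧ (∀ t, G (ξ t) = t) ∧ ∀ t, HasDerivAt ξ (g (ξ t))⁻¹ t := by
  choose ξ hξs hGξ using fun t => hsurj (mem_univ t)
  have hmono : StrictMono ξ := fun t t' htt' =>
    (hG.lt_iff_lt (hξs t) (hξs t')).1 (by rwa [hGξ, hGξ])
  have hrange : s ⊆ ξ '' univ := fun x hx =>
    ⟨G x, mem_univ _, hG.injOn (hξs _) hx (hGξ _)⟩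
  have hcont : ∀ t, ContinuousAt ξ t := fun t =>
    (hmono.strictMonoOn univ).continuousAt_of_image_mem_nhds univ_mem
      (mem_of_superset (hs.mem_nhds (hξs t)) hrange)
  exact ⟨ξ, hξs, hGξ, fun t => (hG' _ (hξs t)).of_local_left_inverse (hcont t)
    (hg _ (hξs t)) (Eventually.of_forall hGξ)⟩

theorem surjOn_Iio_of_monotoneOn_add_log {G : ℝ → ℝ} {a L : ℝ} (hL : 0 < L)
    (hG : ContinuousOn G (Iio a))
    (hmono : MonotoneOn (fun x => G x + Real.log (a - x) / L) (Iio a)) :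
    SurjOn G (Iio a) univ := by
  have hpt : ∀ c : ℝ, a - Real.exp c < a ∧ Real.log (a - (a - Real.exp c)) / L = c / L :=
    fun c => ⟨sub_lt_self a (Real.exp_pos c), by rw [sub_sub_cancel, Real.log_exp]⟩
  have h₀ : a - 1 < a ∧ Real.log (a - (a - 1)) / L = 0 := by simp
  intro t _
  set d := |t - G (a - 1)|
  have hd : 0 ≤ L * d := mul_nonneg hL.le (abs_nonneg _)
  obtain ⟨hxa, hxlog⟩ := hpt (L * d)
  obtain ⟨hya, hylog⟩ := hpt (-(L * d))
  have hx : G (a - Real.exp (L * d)) ≤ t := by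
    have := hmono hxa h₀.1 (sub_le_sub_left (Real.one_le_exp hd) a)
    simp only [hxlog, h₀.2, mul_div_cancel_left₀ _ hL.ne'] at this
    linarith [neg_abs_le (t - G (a - 1))]
  have hy : t ≤ G (a - Real.exp (-(L * d))) := by
    have := hmono h₀.1 hya (sub_le_sub_left (Real.exp_le_one_iff.2 (neg_nonpos.2 hd)) a)
    simp only [hylog, h₀.2, neg_div, mul_div_cancel_left₀ _ hL.ne'] at this
    linarith [le_abs_self (t - G (a - 1))]
  obtain ⟨z, hz, hGz⟩ := intermediate_value_Icc
    (sub_le_sub_left (Real.exp_le_exp.2 (by linarith)) a : a - Real.exp (L * d) ≤ _)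
    (hG.mono fun z hz => hz.2.trans_lt hya) ⟨hx, hy⟩
  exact ⟨z, hz.2.trans_lt hya, hGz⟩

/-- The solution is the inverse of `x ↦ t₀ + ∫ u in x₀..x, 1 / F u`, which maps `Iio a` onto `ℝ`
because `F` vanishes at most linearly at `a`. -/
theorem exists_hasDerivAt_of_pos_of_le_mul_sub {F : ℝ → ℝ} {a L : ℝ} (hF : Continuous F)
    (hpos : ∀ x < a, 0 < F x) (hle : ∀ x < a, F x ≤ L * (a - x)) (t₀ x₀ : ℝ) (hx₀ : x₀ < a) :
    ∃ ξ : ℝ → ℝ, ξ t₀ = x₀ ∧ (∀ t, ξ t < a) ∧ ∀ t, HasDerivAt ξ (F (ξ t)) t := by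
  have hL : 0 < L := by
    simpa using (hpos _ (sub_one_lt a)).trans_le (hle _ (sub_one_lt a))
  set G : ℝ → ℝ := fun x => t₀ + ∫ u in x₀..x, (F u)⁻¹ with hGdef
  have hFinv : ContinuousOn (fun u => (F u)⁻¹) (Iio a) :=
    hF.continuousOn.inv₀ fun u hu => (hpos u hu).ne'
  have hG' : ∀ x ∈ Iio a, HasDerivAt G (F x)⁻¹ x := fun x hx =>
    ((intervalIntegral.integral_hasDerivAt_right
      (hFinv.mono (ordConnected_Iio.uIcc_subset hx₀ hx)).intervalIntegrable
      (hFinv.stronglyMeasurableAtFilter isOpen_Iio x hx)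
      (hFinv.continuousAt (isOpen_Iio.mem_nhds hx))).const_add t₀)
  have hGcont : ContinuousOn G (Iio a) := fun x hx => (hG' x hx).continuousAt.continuousWithinAt
  have hGmono : StrictMonoOn G (Iio a) := by
    refine strictMonoOn_of_hasDerivWithinAt_pos (f' := fun x => (F x)⁻¹) (convex_Iio a) hGcont
      ?_ ?_ <;> simp only [interior_Iio]
    · exact fun x hx => (hG' x hx).hasDerivWithinAt
    · exact fun x hx => inv_pos.2 (hpos x hx)
  have hlog : MonotoneOn (fun x => G x + Real.log (a - x) / L) (Iio a) := by
    have hd : ∀ x ∈ Iio a, HasDerivAt (fun x => G x + Real.log (a - x) / L)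
        ((F x)⁻¹ + -1 / (a - x) / L) x := fun x hx =>
      (hG' x hx).add ((((hasDerivAt_id x).const_sub a).log (sub_pos.2 hx).ne').div_const L)
    refine monotoneOn_of_hasDerivWithinAt_nonneg (f' := fun x => (F x)⁻¹ + -1 / (a - x) / L)
      (convex_Iio a) (fun x hx => (hd x hx).continuousAt.continuousWithinAt) ?_ ?_ <;>
      simp only [interior_Iio]
    · exact fun x hx => (hd x hx).hasDerivWithinAt
    · intro x hx
      have h1 : (L * (a - x))⁻¹ ≤ (F x)⁻¹ := inv_anti₀ (hpos x hx) (hle x hx)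
      have h2 : -1 / (a - x) / L = -(L * (a - x))⁻¹ := by field_simp
      linarith
  obtain ⟨ξ, hξa, hGξ, hξ'⟩ := exists_hasDerivAt_rightInverse_of_strictMonoOn isOpen_Iio hGmono
    hG' (fun x hx => inv_ne_zero (hpos x hx).ne') (surjOn_Iio_of_monotoneOn_add_log hL hGcont hlog)
  have hGx₀ : G x₀ = t₀ := by simp [hGdef]
  exact ⟨ξ, hGmono.injOn (hξa t₀) hx₀ ((hGξ t₀).trans hGx₀.symm), hξa,
    fun t => by simpa using hξ' t⟩

theorem hasDerivAt_of_forall_eq_add_integral {X f : ℝ → ℝ} (hf : Continuous f)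
    (hX : ∀ t₀ t, t₀ ≤ t → X t = X t₀ + ∫ u in t₀..t, f u) (t : ℝ) : HasDerivAt X (f t) t := by
  have hX0 : X = fun x => X 0 + ∫ u in 0..x, f u := funext fun x => by
    rcases le_total 0 x with hx | hx
    · exact hX 0 x hx
    · rw [hX x 0 hx, intervalIntegral.integral_symm]
      ring
  rw [hX0]
  exact (hf.integral_hasStrictDerivAt 0 t).hasDerivAt.const_add _

theorem eventuallyEq_ite_le_of_lt {α : Type*} {f g : ℝ → α} {t₀ t : ℝ} (ht : t < t₀) :
    (fun x => if x ≤ t₀ then f x else g x) =ᶠ[𝓝 t] f := by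
  filter_upwards [Iio_mem_nhds ht] with x hx using if_pos hx.le

theorem eventuallyEq_ite_le_of_gt {α : Type*} {f g : ℝ → α} {t₀ t : ℝ} (ht : t₀ < t) :
    (fun x => if x ≤ t₀ then f x else g x) =ᶠ[𝓝 t] g := by
  filter_upwards [Ioi_mem_nhds ht] with x hx using if_neg (not_le.2 hx)

namespace SIRParams

variable (p : SIRParams)

theorem β_pos : 0 < p.β := p.hγ.trans p.hβγ

theorem Scrit_pos : 0 < p.Scrit := div_pos p.hγ p.β_pos

theorem Scrit_lt_one : p.Scrit < 1 := (div_lt_one p.β_pos).2 p.hβγ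

theorem β_mul_Scrit : p.β * p.Scrit = p.γ := mul_div_cancel₀ _ p.β_pos.ne'

/-- The prevalence of an SIR solution started at `(Scrit, i₀)`, as a function of its cumulative
prevalence `w = ∫ I`: along the solution `S = Scrit * exp (-β w)` and `S + I = Scrit + i₀ - γ w`. -/
def prevalenceOfCumulative (i₀ w : ℝ) : ℝ :=
  p.Scrit + i₀ - p.γ * w - p.Scrit * Real.exp (-(p.β * w))

theorem prevalenceOfCumulative_zero (i₀ : ℝ) : p.prevalenceOfCumulative i₀ 0 = i₀ := by
  simp [prevalenceOfCumulative]

theorem hasDerivAt_prevalenceOfCumulative (i₀ w : ℝ) :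
    HasDerivAt (p.prevalenceOfCumulative i₀) (p.γ * (Real.exp (-(p.β * w)) - 1)) w := by
  have hexp : HasDerivAt (fun w => Real.exp (-(p.β * w))) (Real.exp (-(p.β * w)) * -p.β) w := by
    simpa using ((hasDerivAt_id w).const_mul p.β).neg.exp
  refine ((((hasDerivAt_id w).const_mul p.γ).const_sub (p.Scrit + i₀)).sub
    (hexp.const_mul p.Scrit)).congr_deriv ?_
  linear_combination Real.exp (-(p.β * w)) * p.β_mul_Scrit

theorem continuous_prevalenceOfCumulative (i₀ : ℝ) : Continuous (p.prevalenceOfCumulative i₀) :=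
  continuous_iff_continuousAt.2 fun w => (p.hasDerivAt_prevalenceOfCumulative i₀ w).continuousAt

theorem strictAntiOn_prevalenceOfCumulative (i₀ : ℝ) :
    StrictAntiOn (p.prevalenceOfCumulative i₀) (Ici 0) := by
  refine strictAntiOn_of_hasDerivWithinAt_neg (convex_Ici 0)
    (p.continuous_prevalenceOfCumulative i₀).continuousOn
    (fun w _ => (p.hasDerivAt_prevalenceOfCumulative i₀ w).hasDerivWithinAt) ?_
  simp only [interior_Ici]
  intro w hw
  have : Real.exp (-(p.β * w)) < 1 := Real.exp_lt_one_iff.2 (by nlinarith [p.β_pos, mem_Ioi.1 hw])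
  nlinarith [p.hγ]

theorem prevalenceOfCumulative_le (i₀ : ℝ) {w : ℝ} (hw : 0 ≤ w) :
    p.prevalenceOfCumulative i₀ w ≤ i₀ :=
  ((p.strictAntiOn_prevalenceOfCumulative i₀).antitoneOn self_mem_Ici hw hw).trans_eq
    (p.prevalenceOfCumulative_zero i₀)

theorem exists_prevalenceOfCumulative_pos_le {i₀ : ℝ} (hi₀ : 0 < i₀) :
    ∃ a > 0, (∀ w ∈ Ico 0 a, 0 < p.prevalenceOfCumulative i₀ w) ∧
      ∀ w ≤ a, p.prevalenceOfCumulative i₀ w ≤ p.γ * (a - w) := by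
  set F := p.prevalenceOfCumulative i₀
  set w₁ := (p.Scrit + i₀) / p.γ
  have hw₁ : 0 ≤ w₁ := div_nonneg (by linarith [p.Scrit_pos]) p.hγ.le
  have hFw₁ : F w₁ ≤ 0 := by
    have : p.γ * w₁ = p.Scrit + i₀ := mul_div_cancel₀ _ p.hγ.ne'
    simp only [F, prevalenceOfCumulative, this]
    nlinarith [Real.exp_pos (-(p.β * w₁)), p.Scrit_pos]
  obtain ⟨a, ha, hFa⟩ := intermediate_value_Icc' hw₁
    (p.continuous_prevalenceOfCumulative i₀).continuousOn
    ⟨hFw₁, (p.prevalenceOfCumulative_zero i₀).symm ▸ hi₀.le⟩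
  have ha0 : 0 < a := ha.1.lt_of_ne fun h => by
    rw [← h, p.prevalenceOfCumulative_zero] at hFa
    exact hi₀.ne' hFa
  refine ⟨a, ha0, fun w hw => hFa ▸ p.strictAntiOn_prevalenceOfCumulative i₀ hw.1 ha.1 hw.2, ?_⟩
  have hmono : Monotone fun w => F w + p.γ * w :=
    monotone_of_hasDerivAt_nonneg
      (fun w => (p.hasDerivAt_prevalenceOfCumulative i₀ w).add ((hasDerivAt_id w).const_mul p.γ))
      (fun w => by simp only [Pi.zero_apply]; nlinarith [Real.exp_pos (-(p.β * w)), p.hγ])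
  intro w hw
  have := hmono hw
  dsimp only at this
  rw [show F a = 0 from hFa] at this
  linarith

theorem exists_solution_from_Scrit {i₀ : ℝ} (hi₀ : 0 < i₀) (T : ℝ) :
    ∃ S I : ℝ → ℝ, S T = p.Scrit ∧ I T = i₀ ∧ Continuous S ∧ Continuous I ∧
      (∀ t > T, HasDerivAt S (-(p.β * S t * I t)) t ∧
        HasDerivAt I (p.β * S t * I t - p.γ * I t) t) ∧
      ∀ t ≥ T, 0 < S t ∧ S t ≤ p.Scrit ∧ 0 ≤ I t ∧ I t ≤ i₀ ∧ S t + I t ≤ p.Scrit + i₀ := by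
  set F := p.prevalenceOfCumulative i₀
  obtain ⟨a, ha, hFpos, hFle⟩ := p.exists_prevalenceOfCumulative_pos_le hi₀
  -- Freezing `F` below `0` keeps it positive on all of `Iio a`, and the solution `ξ` of
  -- `ξ' = F ξ` only visits `[0, a)` after time `T`.
  obtain ⟨ξ, hξT, hξa, hξ'⟩ := exists_hasDerivAt_of_pos_of_le_mul_sub (F := fun w => F (max w 0))
    ((p.continuous_prevalenceOfCumulative i₀).comp (continuous_id.max continuous_const))
    (fun w hw => hFpos _ ⟨le_max_right w 0, max_lt hw ha⟩)
    (fun w hw => (hFle _ (max_le hw.le ha.le)).trans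
      (mul_le_mul_of_nonneg_left (by linarith [le_max_left w 0]) p.hγ.le)) T 0 ha
  have hξmono : StrictMono ξ :=
    strictMono_of_hasDerivAt_pos hξ' fun t => hFpos _ ⟨le_max_right _ 0, max_lt (hξa t) ha⟩
  have hξc : Continuous ξ := continuous_iff_continuousAt.2 fun t => (hξ' t).continuousAt
  have hξ0 : ∀ t ≥ T, 0 ≤ ξ t := fun t ht => hξT ▸ hξmono.monotone ht
  have hξd : ∀ t ≥ T, HasDerivAt ξ (F (ξ t)) t := fun t ht => by
    simpa [max_eq_left (hξ0 t ht)] using hξ' t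
  refine ⟨fun t => p.Scrit * Real.exp (-(p.β * ξ t)), fun t => F (ξ t), by simp [hξT],
    by simp [hξT, F, prevalenceOfCumulative_zero], by fun_prop,
    (p.continuous_prevalenceOfCumulative i₀).comp hξc, fun t ht => ⟨?_, ?_⟩, fun t ht => ?_⟩
  · refine ((((hξd t ht.le).const_mul p.β).neg.exp).const_mul p.Scrit).congr_deriv ?_
    simp only [Pi.neg_apply]
    ring
  · refine ((p.hasDerivAt_prevalenceOfCumulative i₀ (ξ t)).comp t (hξd t ht.le)).congr_deriv ?_
    linear_combination -(Real.exp (-(p.β * ξ t)) * F (ξ t)) * p.β_mul_Scrit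
  · have hexp : Real.exp (-(p.β * ξ t)) ≤ 1 :=
      Real.exp_le_one_iff.2 (neg_nonpos.2 (mul_nonneg p.β_pos.le (hξ0 t ht)))
    refine ⟨mul_pos p.Scrit_pos (Real.exp_pos _), mul_le_of_le_one_right p.Scrit_pos.le hexp,
      (hFpos _ ⟨hξ0 t ht, hξa t⟩).le, p.prevalenceOfCumulative_le i₀ (hξ0 t ht), ?_⟩
    simp only [F, prevalenceOfCumulative]
    nlinarith [hξ0 t ht, p.hγ]

/-- `γ / (β S)` makes `I' = 0`; the cap at `Scrit` keeps it at most `1`. -/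
def holdingControl (S : ℝ) : ℝ := p.γ / (p.β * max S p.Scrit)

theorem continuous_holdingControl : Continuous p.holdingControl :=
  continuous_const.div (by fun_prop) fun S =>
    (mul_pos p.β_pos (p.Scrit_pos.trans_le (le_max_right _ _))).ne'

theorem holdingControl_mem_Icc (S : ℝ) : p.holdingControl S ∈ Icc 0 1 := by
  have h := mul_le_mul_of_nonneg_left (le_max_right S p.Scrit) p.β_pos.le
  rw [p.β_mul_Scrit] at h
  exact ⟨div_nonneg p.hγ.le (p.hγ.le.trans h), div_le_one_of_le₀ h (p.hγ.le.trans h)⟩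

theorem holdingControl_of_le {S : ℝ} (hS : S ≤ p.Scrit) : p.holdingControl S = 1 := by
  rw [holdingControl, max_eq_right hS, p.β_mul_Scrit, div_self p.hγ.ne']

theorem holdingControl_mul {S : ℝ} (hS : p.Scrit ≤ S) : p.holdingControl S * p.β * S = p.γ := by
  have := p.Scrit_pos.trans_le hS
  have := p.β_pos
  rw [holdingControl, max_eq_left hS]
  field_simp

/-- While `I` is held at `I₀`, `S` falls at the constant rate `γ I₀`. -/
theorem exists_control_hold_then_release {S₀ I₀ t₀ τ : ℝ} (hI₀ : 0 < I₀) (hτ : 0 < τ)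
    (hS₀ : p.γ * τ * I₀ = S₀ - p.Scrit) :
    ∃ c S I : ℝ → ℝ, Continuous c ∧ (∀ t, c t ∈ Icc 0 1) ∧ (∀ t > t₀ + τ, c t = 1) ∧
      Continuous S ∧ Continuous I ∧ S t₀ = S₀ ∧ I t₀ = I₀ ∧
      (∀ t ≥ t₀, 0 < S t ∧ 0 ≤ I t ∧ S t + I t ≤ S₀ + I₀ ∧ I t ≤ I₀) ∧
      ∀ t > t₀, t ∉ ({t₀ + τ} : Set ℝ) → HasDerivAt S (-(c t * p.β * S t * I t)) t ∧
        HasDerivAt I (c t * p.β * S t * I t - p.γ * I t) t := by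
  set T := t₀ + τ
  have hT : t₀ ≤ T := le_add_of_nonneg_right hτ.le
  set Sm : ℝ → ℝ := fun t => S₀ - p.γ * I₀ * (t - t₀)
  have hγI₀ : 0 < p.γ * I₀ := mul_pos p.hγ hI₀
  have hSmT : Sm T = p.Scrit := by simp only [Sm, T]; linear_combination -hS₀
  have hSm_ge : ∀ t ≤ T, p.Scrit ≤ Sm t := fun t ht => by
    rw [← hSmT]; simp only [Sm]; nlinarith
  have hSm_le : ∀ t ≥ T, Sm t ≤ p.Scrit := fun t ht => by
    rw [← hSmT]; simp only [Sm]; nlinarith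
  obtain ⟨S2, I2, hS2T, hI2T, hS2, hI2, hderiv2, hbounds2⟩ := p.exists_solution_from_Scrit hI₀ T
  set S : ℝ → ℝ := fun t => if t ≤ T then Sm t else S2 t
  set I : ℝ → ℝ := fun t => if t ≤ T then I₀ else I2 t
  refine ⟨fun t => p.holdingControl (Sm t), S, I, p.continuous_holdingControl.comp (by fun_prop),
    fun t => p.holdingControl_mem_Icc _, fun t ht => p.holdingControl_of_le (hSm_le t ht.le),
    Continuous.if_le (by fun_prop) hS2 continuous_id continuous_const
      fun x hx => hx ▸ hSmT.trans hS2T.symm,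
    Continuous.if_le continuous_const hI2 continuous_id continuous_const fun x hx => hx ▸ hI2T.symm,
    by simp [S, Sm, hT], if_pos hT, fun t ht => ?_, fun t _ htT => ?_⟩
  · simp only [S, I]
    split_ifs with htT
    · refine ⟨p.Scrit_pos.trans_le (hSm_ge t htT), hI₀.le, ?_, le_rfl⟩
      simp only [Sm]
      nlinarith
    · obtain ⟨h1, -, h3, h4, h5⟩ := hbounds2 t (le_of_not_ge htT)
      exact ⟨h1, h3, by linarith [mul_pos (mul_pos p.hγ hτ) hI₀], h4⟩
  · rcases lt_or_gt_of_ne htT with htT | htT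
    · have hSm' : HasDerivAt Sm (-(p.γ * I₀)) t := by
        simpa using ((hasDerivAt_id t).sub_const t₀).const_mul (p.γ * I₀) |>.const_sub S₀
      simp only [S, I, if_pos htT.le]
      rw [p.holdingControl_mul (hSm_ge t htT.le)]
      exact ⟨hSm'.congr_of_eventuallyEq (eventuallyEq_ite_le_of_lt htT),
        ((hasDerivAt_const t I₀).congr_of_eventuallyEq (eventuallyEq_ite_le_of_lt htT))
          |>.congr_deriv (by ring)⟩
    · obtain ⟨h1, h2⟩ := hderiv2 t htT
      simp only [S, I, if_neg (not_le.2 htT), p.holdingControl_of_le (hSm_le t htT.le), one_mul]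
      exact ⟨h1.congr_of_eventuallyEq (eventuallyEq_ite_le_of_gt htT),
        h2.congr_of_eventuallyEq (eventuallyEq_ite_le_of_gt htT)⟩

end SIRParams

theorem Imax_le {I : ℝ → ℝ} {M : ℝ} (h : ∀ t, I t ≤ M) : Imax I ≤ M :=
  csSup_le (range_nonempty I) (forall_mem_range.2 h)

namespace IsSIRTrajectory

variable {p : SIRParams} {b S I : ℝ → ℝ}

theorem continuous_S (h : IsSIRTrajectory p b univ S I) : Continuous S :=
  continuousOn_univ.1 h.contS

theorem continuous_I (h : IsSIRTrajectory p b univ S I) : Continuous I :=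
  continuousOn_univ.1 h.contI

theorem le_Imax (h : IsSIRTrajectory p b univ S I) (t : ℝ) : I t ≤ Imax I :=
  le_csSup ⟨1, forall_mem_range.2 fun t => by linarith [h.sum_le_one t trivial, h.Spos t trivial]⟩
    (mem_range_self t)

theorem of_hasDerivAt {s : Set ℝ} (hs : s.Countable) (hb : Measurable b)
    (hb01 : ∀ t, b t ∈ Icc 0 1) (hS : Continuous S) (hI : Continuous I) (hSpos : ∀ t, 0 < S t)
    (hInonneg : ∀ t, 0 ≤ I t) (hsum : ∀ t, S t + I t ≤ 1)
    (hS' : ∀ t ∉ s, HasDerivAt S (-(b t * p.β * S t * I t)) t)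
    (hI' : ∀ t ∉ s, HasDerivAt I (b t * p.β * S t * I t - p.γ * I t) t) :
    IsSIRTrajectory p b univ S I := by
  have hint : ∀ x y, IntervalIntegrable (fun u => b u * p.β * S u * I u) volume x y := by
    intro x y
    have hc : Continuous fun u => p.β * S u * I u := by fun_prop
    refine (hc.intervalIntegrable x y).mono_fun (by fun_prop) (Eventually.of_forall fun u => ?_)
    dsimp only
    rw [show b u * p.β * S u * I u = b u * (p.β * S u * I u) by ring, norm_mul]
    exact mul_le_of_le_one_left (norm_nonneg _)
      ((Real.norm_of_nonneg (hb01 u).1).trans_le (hb01 u).2)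
  refine ⟨fun _ _ _ _ => trivial, hS.continuousOn, hI.continuousOn, fun t _ => hSpos t,
    fun t _ => by linarith [hsum t, hInonneg t], fun t _ => hInonneg t, fun t _ => hsum t,
    fun t₀ _ t _ ht => ?_, fun t₀ _ t _ ht => ?_⟩
  · have := integral_eq_of_hasDerivAt_off_countable_of_le S _ ht hs hS.continuousOn
      (fun u hu => hS' u hu.2) (hint t₀ t).neg
    rw [intervalIntegral.integral_neg] at this
    linarith
  · have := integral_eq_of_hasDerivAt_off_countable_of_le I _ ht hs hI.continuousOn
      (fun u hu => hI' u hu.2) ((hint t₀ t).sub ((continuous_const.mul hI).intervalIntegrable _ _))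
    linarith

theorem hasDerivAt (h : IsSIRTrajectory p b univ S I) (hb : Continuous b) (t : ℝ) :
    HasDerivAt S (-(b t * p.β * S t * I t)) t ∧
      HasDerivAt I (b t * p.β * S t * I t - p.γ * I t) t := by
  have hS := h.continuous_S
  have hI := h.continuous_I
  refine ⟨hasDerivAt_of_forall_eq_add_integral (f := fun u => -(b u * p.β * S u * I u))
      (by fun_prop) (fun t₀ t ht => ?_) t,
    hasDerivAt_of_forall_eq_add_integral (f := fun u => b u * p.β * S u * I u - p.γ * I u)
      (by fun_prop) (fun t₀ t ht => h.I_eq t₀ trivial t trivial ht) t⟩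
  rw [h.S_eq t₀ trivial t trivial ht, intervalIntegral.integral_neg, sub_eq_add_neg]

theorem antitone_S (h : IsSIRTrajectory p b univ S I) (hb : ∀ t, 0 ≤ b t) : Antitone S :=
  fun t₀ t ht => by
    rw [h.S_eq t₀ trivial t trivial ht, sub_le_self_iff]
    exact intervalIntegral.integral_nonneg ht fun u _ => mul_nonneg (mul_nonneg
      (mul_nonneg (hb u) p.β_pos.le) (h.Spos u trivial).le) (h.Inonneg u trivial)

theorem monotoneOn_I (h : IsSIRTrajectory p nullB univ S I) {c : ℝ} (hc : p.Scrit ≤ S c) :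
    MonotoneOn I (Iic c) := fun t₀ _ t ht htt₀ => by
  rw [h.I_eq t₀ trivial t trivial htt₀, le_add_iff_nonneg_right]
  refine intervalIntegral.integral_nonneg htt₀ fun u hu => ?_
  have hSu : p.Scrit ≤ S u :=
    hc.trans (h.antitone_S (fun _ => zero_le_one) (hu.2.trans ht))
  have : p.γ ≤ p.β * S u := p.β_mul_Scrit ▸ mul_le_mul_of_nonneg_left hSu p.β_pos.le
  simp only [nullB, one_mul]
  nlinarith [h.Inonneg u trivial]

end IsSIRTrajectory

namespace IsReference

variable {p : SIRParams} {S1 I1 : ℝ → ℝ}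

theorem exists_S_lt_Scrit (href : IsReference p S1 I1) : ∃ t, S1 t < p.Scrit := by
  by_contra! hS
  obtain ⟨htraj, hIpos, -, -⟩ := href
  -- `S1` would decrease at rate at least `β Scrit I1 0` forever.
  set d := p.β * p.Scrit * I1 0
  have hd : 0 < d := mul_pos (mul_pos p.β_pos p.Scrit_pos) (hIpos 0)
  set t := S1 0 / d
  have ht : 0 ≤ t := div_nonneg (htraj.Spos 0 trivial).le hd.le
  have hS1 := htraj.continuous_S
  have hI1 := htraj.continuous_I
  have hge : ∫ _ in (0 : ℝ)..t, d ≤ ∫ u in (0 : ℝ)..t, nullB u * p.β * S1 u * I1 u := by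
    refine intervalIntegral.integral_mono_on ht intervalIntegrable_const
      ((show Continuous fun u => nullB u * p.β * S1 u * I1 u by unfold nullB; fun_prop)
        |>.intervalIntegrable _ _) fun u hu => ?_
    simp only [nullB, one_mul, d]
    exact mul_le_mul (mul_le_mul_of_nonneg_left (hS u) p.β_pos.le)
      (htraj.monotoneOn_I (hS u) hu.1 self_mem_Iic hu.1) (hIpos 0).le
      (mul_nonneg p.β_pos.le (htraj.Spos u trivial).le)
  rw [intervalIntegral.integral_const, smul_eq_mul, sub_zero,
    div_mul_cancel₀ _ hd.ne'] at hge
  linarith [htraj.S_eq 0 trivial t trivial ht, htraj.Spos t trivial]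

theorem exists_γ_mul_I_eq (href : IsReference p S1 I1) {τ : ℝ} (hτ : 0 < τ) :
    ∃ t₀, p.γ * τ * I1 t₀ = S1 t₀ - p.Scrit := by
  obtain ⟨tp, htp⟩ := href.exists_S_lt_Scrit
  obtain ⟨htraj, hIpos, hS1lim, hI1lim⟩ := href
  set g : ℝ → ℝ := fun t => p.γ * τ * I1 t - S1 t + p.Scrit
  have hg : Continuous g := by
    have := htraj.continuous_S
    have := htraj.continuous_I
    fun_prop
  have hgtp : 0 < g tp := by
    have := mul_pos (mul_pos p.hγ hτ) (hIpos tp)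
    simp only [g]
    linarith
  have hglim : Tendsto g atBot (𝓝 (p.γ * τ * 0 - 1 + p.Scrit)) :=
    ((hI1lim.const_mul _).sub hS1lim).add_const _
  obtain ⟨tm, htm, htmtp⟩ := ((hglim.eventually_lt_const
    (show p.γ * τ * 0 - 1 + p.Scrit < 0 by linarith [p.Scrit_lt_one])).and
    (eventually_le_atBot tp)).exists
  obtain ⟨t₀, -, ht₀⟩ := intermediate_value_Icc htmtp hg.continuousOn ⟨htm.le, hgtp.le⟩
  exact ⟨t₀, by simp only [g] at ht₀; linarith⟩

end IsReference

def Intervention.switchOn (p : SIRParams) (t₀ τ : ℝ) (hτ : 0 < τ) (c : ℝ → ℝ)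
    (hc : Continuous c) (hc01 : ∀ t, c t ∈ Icc 0 1) (hc1 : ∀ t > t₀ + τ, c t = 1) :
    Intervention p where
  b t := if t < t₀ then 1 else c t
  ti := t₀
  τ := τ
  hτ := hτ
  mem_Icc t := by
    split_ifs
    exacts [⟨zero_le_one, le_rfl⟩, hc01 t]
  rightCont t := by
    rcases lt_or_ge t t₀ with ht | ht
    · refine ((continuousAt_const (y := (1 : ℝ))).congr ?_).continuousWithinAt
      filter_upwards [Iio_mem_nhds ht] with x hx using (if_pos hx).symm
    · exact hc.continuousWithinAt.congr (fun x hx => if_neg (not_lt.2 (ht.trans hx)))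
        (if_neg (not_lt.2 ht))
  finiteDisc := by
    refine (finite_singleton t₀).subset fun t ht => ?_
    by_contra hne
    rcases lt_or_gt_of_ne hne with ht' | ht'
    · refine ht ((continuousAt_const (y := (1 : ℝ))).congr ?_)
      filter_upwards [Iio_mem_nhds ht'] with x hx using (if_pos hx).symm
    · refine ht (hc.continuousAt.congr ?_)
      filter_upwards [Ioi_mem_nhds ht'] with x hx using (if_neg (not_lt.2 hx.le)).symm
  outside t ht := by
    rcases lt_or_ge t t₀ with h | h
    · exact if_pos h
    · exact (if_neg (not_lt.2 h)).trans (hc1 t (lt_of_not_ge fun h' => ht ⟨h, h'⟩))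

theorem IsSIRTrajectory.isControlled_switchOn {p : SIRParams} {S1 I1 S I c : ℝ → ℝ}
    {t₀ τ : ℝ} {s : Set ℝ} (href : IsSIRTrajectory p nullB univ S1 I1) (hτ : 0 < τ)
    (hc : Continuous c) (hc01 : ∀ t, c t ∈ Icc 0 1) (hc1 : ∀ t > t₀ + τ, c t = 1)
    (hS : Continuous S) (hI : Continuous I) (hS₀ : S t₀ = S1 t₀) (hI₀ : I t₀ = I1 t₀)
    (hbounds : ∀ t ≥ t₀, 0 < S t ∧ 0 ≤ I t ∧ S t + I t ≤ 1) (hs : s.Countable)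
    (hderiv : ∀ t > t₀, t ∉ s → HasDerivAt S (-(c t * p.β * S t * I t)) t ∧
      HasDerivAt I (c t * p.β * S t * I t - p.γ * I t) t) :
    IsControlled p S1 I1 (Intervention.switchOn p t₀ τ hτ c hc hc01 hc1)
      (fun t => if t ≤ t₀ then S1 t else S t) (fun t => if t ≤ t₀ then I1 t else I t) := by
  set b := (Intervention.switchOn p t₀ τ hτ c hc hc01 hc1).b
  set Sg : ℝ → ℝ := fun t => if t ≤ t₀ then S1 t else S t
  set Ig : ℝ → ℝ := fun t => if t ≤ t₀ then I1 t else I t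
  have hbounds' : ∀ t, 0 < Sg t ∧ 0 ≤ Ig t ∧ Sg t + Ig t ≤ 1 := fun t => by
    simp only [Sg, Ig]
    split_ifs with ht
    · exact ⟨href.Spos t trivial, href.Inonneg t trivial, href.sum_le_one t trivial⟩
    · exact hbounds t (not_le.1 ht).le
  have hderiv' : ∀ t ∉ s ∪ {t₀}, HasDerivAt Sg (-(b t * p.β * Sg t * Ig t)) t ∧
      HasDerivAt Ig (b t * p.β * Sg t * Ig t - p.γ * Ig t) t := by
    intro t ht
    simp only [mem_union, mem_singleton_iff, not_or] at ht
    rcases lt_or_gt_of_ne ht.2 with ht₀ | ht₀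
    · obtain ⟨h1, h2⟩ := href.hasDerivAt continuous_const t
      simp only [b, Sg, Ig, Intervention.switchOn, if_pos ht₀, if_pos ht₀.le]
      exact ⟨h1.congr_of_eventuallyEq (eventuallyEq_ite_le_of_lt ht₀),
        h2.congr_of_eventuallyEq (eventuallyEq_ite_le_of_lt ht₀)⟩
    · obtain ⟨h1, h2⟩ := hderiv t ht₀ ht.1
      simp only [b, Sg, Ig, Intervention.switchOn, if_neg (not_lt.2 ht₀.le),
        if_neg (not_le.2 ht₀)]
      exact ⟨h1.congr_of_eventuallyEq (eventuallyEq_ite_le_of_gt ht₀),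
        h2.congr_of_eventuallyEq (eventuallyEq_ite_le_of_gt ht₀)⟩
  refine ⟨of_hasDerivAt (hs.union (countable_singleton t₀))
    (Measurable.ite measurableSet_Iio measurable_const hc.measurable) (Intervention.mem_Icc _)
    (href.continuous_S.if_le hS continuous_id continuous_const fun x hx => hx ▸ hS₀.symm)
    (href.continuous_I.if_le hI continuous_id continuous_const fun x hx => hx ▸ hI₀.symm)
    (fun t => (hbounds' t).1) (fun t => (hbounds' t).2.1) (fun t => (hbounds' t).2.2)
    (fun t ht => (hderiv' t ht).1) (fun t ht => (hderiv' t ht).2),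
    fun t ht => ⟨if_pos ht, if_pos ht⟩⟩

theorem IsReference.exists_isControlled_Imax_le {p : SIRParams} {S1 I1 : ℝ → ℝ}
    (href : IsReference p S1 I1) {τ t₀ : ℝ} (hτ : 0 < τ)
    (ht₀ : p.γ * τ * I1 t₀ = S1 t₀ - p.Scrit) :
    ∃ (b : Intervention p) (S I : ℝ → ℝ), b.τ = τ ∧ IsControlled p S1 I1 b S I ∧
      Imax I ≤ I1 t₀ := by
  obtain ⟨htraj, hIpos, -, -⟩ := href
  obtain ⟨c, S, I, hc, hc01, hc1, hS, hI, hS₀, hI₀, hbounds, hderiv⟩ :=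
    p.exists_control_hold_then_release (hIpos t₀) hτ ht₀
  refine ⟨Intervention.switchOn p t₀ τ hτ c hc hc01 hc1, _, _, rfl,
    htraj.isControlled_switchOn hτ hc hc01 hc1 hS hI hS₀ hI₀ (fun t ht => ⟨(hbounds t ht).1,
      (hbounds t ht).2.1, (hbounds t ht).2.2.1.trans (htraj.sum_le_one t₀ trivial)⟩)
      (countable_singleton _) hderiv, Imax_le fun t => ?_⟩
  split_ifs with ht
  · have hScrit : p.Scrit ≤ S1 t₀ := by linarith [mul_pos (mul_pos p.hγ hτ) (hIpos t₀)]
    exact htraj.monotoneOn_I hScrit ht self_mem_Iic ht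
  · exact (hbounds t (le_of_not_ge ht)).2.2.2

theorem IsReference.tendsto_ti_atBot {p : SIRParams} {S1 I1 : ℝ → ℝ} {ι : Type*} {l : Filter ι}
    (href : IsReference p S1 I1) {b : ι → Intervention p} {S I : ι → ℝ → ℝ}
    (hctrl : ∀ᶠ i in l, IsControlled p S1 I1 (b i) (S i) (I i))
    (hI : Tendsto (fun i => Imax (I i)) l (𝓝 0)) : Tendsto (fun i => (b i).ti) l atBot := by
  refine tendsto_atBot.2 fun M => ?_
  filter_upwards [hctrl, hI.eventually_lt_const (href.2.1 M)] with i hi hlt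
  by_contra! hM
  have := (hi.2 M hM.le).2 ▸ hi.1.le_Imax M
  linarith

/-- If you have lots of gunpowder, shoot early: the prevalence
at the start of an optimal intervention of duration τ is at most
`(1 − Scrit)/(γτ)`; hence as τ → ∞ the optimal intervention starts with
`I(t_i) → 0` and `S(t_i) → 1`. -/
theorem lots_of_gunpowder_shoot_early (p : SIRParams) (S1 I1 : ℝ → ℝ)
    (href : IsReference p S1 I1)
    (bfam : ℝ → Intervention p) (Sfam Ifam : ℝ → ℝ → ℝ)
    (hfam : ∀ τ, 0 < τ → (bfam τ).τ = τ ∧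
      IsOptimal p S1 I1 (bfam τ) (Sfam τ) (Ifam τ)) :
    (∀ τ, 0 < τ → Ifam τ ((bfam τ).ti) ≤ (1 - p.Scrit) / (p.γ * τ)) ∧
    Filter.Tendsto (fun τ => Ifam τ ((bfam τ).ti)) Filter.atTop (nhds 0) ∧
    Filter.Tendsto (fun τ => Sfam τ ((bfam τ).ti)) Filter.atTop (nhds 1) := by
  have hbound : ∀ τ, 0 < τ → Imax (Ifam τ) ≤ (1 - p.Scrit) / (p.γ * τ) := fun τ hτ => by
    obtain ⟨hτeq, -, hopt⟩ := hfam τ hτ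
    obtain ⟨t₀, ht₀⟩ := href.exists_γ_mul_I_eq hτ
    obtain ⟨b, S, I, hbτ, hctrl, hImax⟩ := href.exists_isControlled_Imax_le hτ ht₀
    calc Imax (Ifam τ) ≤ Imax I := hopt b (hbτ.trans hτeq.symm) S I hctrl
      _ ≤ I1 t₀ := hImax
      _ = (S1 t₀ - p.Scrit) / (p.γ * τ) := by rw [← ht₀]; field_simp [p.hγ.ne', hτ.ne']
      _ ≤ (1 - p.Scrit) / (p.γ * τ) := by
        gcongr
        · exact (mul_pos p.hγ hτ).le
        · exact href.1.Sle_one t₀ trivial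
  have hctrl : ∀ᶠ τ in atTop, IsControlled p S1 I1 (bfam τ) (Sfam τ) (Ifam τ) :=
    (eventually_gt_atTop 0).mono fun τ hτ => (hfam τ hτ).2.1
  have hImax : Tendsto (fun τ => Imax (Ifam τ)) atTop (𝓝 0) :=
    tendsto_of_tendsto_of_tendsto_of_le_of_le' tendsto_const_nhds
      (tendsto_const_nhds.div_atTop (tendsto_id.const_mul_atTop p.hγ))
      (hctrl.mono fun τ h => (h.1.Inonneg 0 trivial).trans (h.1.le_Imax 0))
      ((eventually_gt_atTop 0).mono hbound)
  have hti := href.tendsto_ti_atBot hctrl hImax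
  refine ⟨fun τ hτ => ((hfam τ hτ).2.1.1.le_Imax _).trans (hbound τ hτ), ?_, ?_⟩
  · exact (href.2.2.2.comp hti).congr' (hctrl.mono fun τ h => (h.2 _ le_rfl).2.symm)
  · exact (href.2.2.1.comp hti).congr' (hctrl.mono fun τ h => (h.2 _ le_rfl).1.symm)
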